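/- arXiv:2508.12816 — 3 statements merged into one kernel-verified Lean document; each statement's English description precedes it below -/
import Mathlib

section
/- Let μ > 0, r > 0, 0 ≤ α < 1, and 0 < β ≤ 1/2. Define for t > 0: ξ(t) = (r/(1−α))·t^{1−α}, D(t) = e^{βξ(t)}, B(t)² = βr·[(1−β)r·t^{1−α} + α]·t^{−α−1}·e^{βξ(t)}, and P(t) = μt² − (1−β)β·r²·t^{2(1−α)} + (2−3β)·rα·t^{1−α} + α(α+1). Then for all t > 0, (d/dt)(B(t)²) − μ·D'(t) = −βr·P(t)·t^{−α−2}·e^{βξ(t)}. Consequently, if f : ℝ^d → ℝ is continuously differentiable and μ-strongly convex with minimizer x* and f* = f(x*), then for every t > 0 with P(t) ≥ 0 and every z ∈ ℝ^d: B(t)B'(t)·‖z − x*‖² − D'(t)·[f* − f(z) − ⟨∇f(z), x* − z⟩] ≤ −(1/2)·βr·P(t)·t^{−α−2}·e^{βξ(t)}·‖z − x*‖² ≤ 0. -/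
open RealInnerProductSpace Real

/-!
Writing `B² = βr((1-β)r t^{1-α} + α) t^{-α-1} D` and using `D' = βr t^{-α} D`, the product rule
and a regrouping of the powers of `t` give `(B²)' = μD' - βr P t^{-α-2} D`. Since `B² > 0`,
`B B' = (B²)'/2`, and strong convexity bounds the gap `f* - f(z) - ⟪∇f(z), x* - z⟫` below by
`μ/2 ‖z - x*‖²`; as `D' ≥ 0`, the two `μ D'` terms cancel and only `-(βr/2) P t^{-α-2} D ‖z - x*‖²`
remains.
-/

theorem HasDerivAt.sqrt_sq {f : ℝ → ℝ} {f' x : ℝ} (hf : HasDerivAt f f' x) (hx : 0 < f x) :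
    HasDerivAt (fun y => √(f y) ^ 2) f' x :=
  hf.congr_of_eventuallyEq <|
    (hf.continuousAt.eventually (lt_mem_nhds hx)).mono fun _ hy => sq_sqrt hy.le

theorem sqrt_mul_deriv_sqrt {f : ℝ → ℝ} {f' x : ℝ} (hf : HasDerivAt f f' x) (hx : 0 < f x) :
    √(f x) * deriv (fun y => √(f y)) x = f' / 2 := by
  rw [(hf.sqrt hx.ne').deriv]
  have : √(f x) ≠ 0 := (Real.sqrt_pos.2 hx).ne'
  field_simp

noncomputable section DampedSystem

variable (μ r α β : ℝ)

-- The paper's `D = e^{βξ}`, `B²` and `P`.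
def dampingWeight (t : ℝ) : ℝ := exp (β * (r / (1 - α) * t ^ (1 - α)))

def lyapunovCoeffSq (t : ℝ) : ℝ :=
  β * r * ((1 - β) * r * t ^ (1 - α) + α) * t ^ (-α - 1) * dampingWeight r α β t

def lyapunovPoly (t : ℝ) : ℝ :=
  μ * t ^ 2 - (1 - β) * β * r ^ 2 * t ^ (2 * (1 - α)) + (2 - 3 * β) * r * α * t ^ (1 - α)
    + α * (α + 1)

variable {μ r α β}

theorem hasDerivAt_dampingWeight {t : ℝ} (hα : α ≠ 1) (ht : 0 < t) :
    HasDerivAt (dampingWeight r α β) (β * r / t ^ α * dampingWeight r α β t) t := by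
  have hpow : HasDerivAt (fun s : ℝ => s ^ (1 - α)) ((1 - α) * t ^ (1 - α - 1)) t :=
    hasDerivAt_rpow_const (Or.inl ht.ne')
  refine ((hpow.const_mul (r / (1 - α))).const_mul β).exp.congr_deriv ?_
  have h1α : 1 - α ≠ 0 := sub_ne_zero.2 hα.symm
  rw [dampingWeight, sub_sub_cancel_left, rpow_neg ht.le]
  field_simp

theorem lyapunovCoeffSq_pos {t : ℝ} (hr : 0 < r) (hα : 0 ≤ α) (hβ0 : 0 < β) (hβ1 : β < 1)
    (ht : 0 < t) : 0 < lyapunovCoeffSq r α β t := by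
  have := rpow_pos_of_pos ht (1 - α)
  have := rpow_pos_of_pos ht (-α - 1)
  have : 0 < 1 - β := by linarith
  unfold lyapunovCoeffSq dampingWeight
  positivity

theorem hasDerivAt_lyapunovCoeffSq {t : ℝ} (hα : α < 1) (ht : 0 < t) :
    HasDerivAt (lyapunovCoeffSq r α β)
      (μ * (β * r / t ^ α * dampingWeight r α β t)
        - β * r * lyapunovPoly μ r α β t * t ^ (-α - 2) * dampingWeight r α β t) t := by
  have hpow (p : ℝ) : HasDerivAt (fun s : ℝ => s ^ p) (p * t ^ (p - 1)) t :=
    hasDerivAt_rpow_const (Or.inl ht.ne')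
  have hprod := ((((hpow (1 - α)).const_mul ((1 - β) * r)).add_const α).const_mul (β * r)).mul
    (hpow (-α - 1)) |>.mul (hasDerivAt_dampingWeight (r := r) (β := β) hα.ne ht)
  refine hprod.congr_deriv ?_
  set A := t ^ (-α) with hA
  have e1 : t ^ (1 - α) = t * A := by rw [sub_eq_add_neg, rpow_add ht, rpow_one]
  have e2 : t ^ (1 - α - 1) = A := by rw [sub_sub_cancel_left]
  have e3 : t ^ (-α - 1) = A / t := by rw [rpow_sub ht, rpow_one]
  have e4 : t ^ (-α - 2) = A / t ^ 2 := by rw [rpow_sub ht, rpow_two]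
  have e5 : t ^ (-α - 1 - 1) = A / t ^ 2 := by rw [sub_sub, one_add_one_eq_two, e4]
  have e6 : t ^ (2 * (1 - α)) = (t * A) ^ 2 := by rw [two_mul, rpow_add ht, e1, sq]
  have e7 : t ^ α = A⁻¹ := by rw [hA, rpow_neg ht.le, inv_inv]
  simp only [lyapunovPoly, Pi.mul_apply, e1, e2, e3, e5, e4, e6, e7]
  field_simp
  ring

end DampedSystem

theorem stmt11_general (μ r α β : ℝ) (hr : 0 < r) (hα0 : 0 ≤ α) (hα1 : α < 1)
    (hβ0 : 0 < β) (hβ : β ≤ 1 / 2) :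
    let ξ : ℝ → ℝ := fun t => r / (1 - α) * t ^ (1 - α)
    let D : ℝ → ℝ := fun t => Real.exp (β * ξ t)
    let B : ℝ → ℝ := fun t =>
      Real.sqrt (β * r * ((1 - β) * r * t ^ (1 - α) + α) * t ^ (-α - 1) * Real.exp (β * ξ t))
    let P : ℝ → ℝ := fun t => μ * t ^ 2 - (1 - β) * β * r ^ 2 * t ^ (2 * (1 - α))
      + (2 - 3 * β) * r * α * t ^ (1 - α) + α * (α + 1)
    (∀ t > (0 : ℝ),
      HasDerivAt D (β * r / t ^ α * D t) t ∧
      HasDerivAt (fun s => B s ^ 2)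
        (μ * (β * r / t ^ α * D t) - β * r * P t * t ^ (-α - 2) * D t) t) ∧
    (∀ d : ℕ, ∀ f : EuclideanSpace ℝ (Fin d) → ℝ, ContDiff ℝ 1 f →
      (∀ z y : EuclideanSpace ℝ (Fin d),
        μ / 2 * ‖y - z‖ ^ 2 ≤ f y - f z - ⟪gradient f z, y - z⟫) →
      ∀ xstar : EuclideanSpace ℝ (Fin d), (∀ y, f xstar ≤ f y) →
      ∀ t > (0 : ℝ), 0 ≤ P t → ∀ z : EuclideanSpace ℝ (Fin d),
        B t * deriv B t * ‖z - xstar‖ ^ 2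
            - (β * r / t ^ α * D t) * (f xstar - f z - ⟪gradient f z, xstar - z⟫)
          ≤ -(1 / 2 * (β * r) * P t * t ^ (-α - 2) * D t) * ‖z - xstar‖ ^ 2 ∧
        -(1 / 2 * (β * r) * P t * t ^ (-α - 2) * D t) * ‖z - xstar‖ ^ 2 ≤ 0) := by
  intro ξ D B P
  have hB2 (t : ℝ) (ht : 0 < t) := hasDerivAt_lyapunovCoeffSq (μ := μ) (r := r) (β := β) hα1 ht
  have hB2pos (t : ℝ) (ht : 0 < t) : 0 < lyapunovCoeffSq r α β t :=
    lyapunovCoeffSq_pos hr hα0 hβ0 (by linarith) ht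
  refine ⟨fun t ht => ⟨hasDerivAt_dampingWeight hα1.ne ht, (hB2 t ht).sqrt_sq (hB2pos t ht)⟩, ?_⟩
  intro d f _ hconvex xstar _ t ht hP z
  have hD' : 0 < β * r / t ^ α * D t := by have := rpow_pos_of_pos ht α; positivity
  have hgap := hconvex z xstar
  rw [norm_sub_rev] at hgap
  constructor
  · have hBB : B t * deriv B t
        = (μ * (β * r / t ^ α * D t) - β * r * P t * t ^ (-α - 2) * D t) / 2 :=
      sqrt_mul_deriv_sqrt (hB2 t ht) (hB2pos t ht)
    rw [hBB]
    nlinarith [mul_le_mul_of_nonneg_left hgap hD'.le]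
  · have := rpow_pos_of_pos ht (-α - 2)
    exact mul_nonpos_of_nonpos_of_nonneg (neg_nonpos.2 (by positivity)) (sq_nonneg _)

/-- the identity `(d/dt)(B(t)²) − μ·D'(t) = −βr·P(t)·t^{−α−2}·e^{βξ(t)}`
and the resulting estimate on the strongly convex terms of the Lyapunov derivative. -/
theorem stmt11 (μ r α β : ℝ) (hμ : 0 < μ) (hr : 0 < r) (hα0 : 0 ≤ α) (hα1 : α < 1)
    (hβ0 : 0 < β) (hβ : β ≤ 1 / 2) :
    let ξ : ℝ → ℝ := fun t => r / (1 - α) * t ^ (1 - α)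
    let D : ℝ → ℝ := fun t => Real.exp (β * ξ t)
    let B : ℝ → ℝ := fun t =>
      Real.sqrt (β * r * ((1 - β) * r * t ^ (1 - α) + α) * t ^ (-α - 1) * Real.exp (β * ξ t))
    let P : ℝ → ℝ := fun t => μ * t ^ 2 - (1 - β) * β * r ^ 2 * t ^ (2 * (1 - α))
      + (2 - 3 * β) * r * α * t ^ (1 - α) + α * (α + 1)
    (∀ t > (0 : ℝ),
      HasDerivAt D (β * r / t ^ α * D t) t ∧
      HasDerivAt (fun s => B s ^ 2)
        (μ * (β * r / t ^ α * D t) - β * r * P t * t ^ (-α - 2) * D t) t) ∧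
    (∀ d : ℕ, ∀ f : EuclideanSpace ℝ (Fin d) → ℝ, ContDiff ℝ 1 f →
      (∀ z y : EuclideanSpace ℝ (Fin d),
        μ / 2 * ‖y - z‖ ^ 2 ≤ f y - f z - ⟪gradient f z, y - z⟫) →
      ∀ xstar : EuclideanSpace ℝ (Fin d), (∀ y, f xstar ≤ f y) →
      ∀ t > (0 : ℝ), 0 ≤ P t → ∀ z : EuclideanSpace ℝ (Fin d),
        B t * deriv B t * ‖z - xstar‖ ^ 2
            - (β * r / t ^ α * D t) * (f xstar - f z - ⟪gradient f z, xstar - z⟫)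
          ≤ -(1 / 2 * (β * r) * P t * t ^ (-α - 2) * D t) * ‖z - xstar‖ ^ 2 ∧
        -(1 / 2 * (β * r) * P t * t ^ (-α - 2) * D t) * ‖z - xstar‖ ^ 2 ≤ 0) :=
  stmt11_general μ r α β hr hα0 hα1 hβ0 hβ
end

section
/- Let f : ℝ^d → ℝ be twice continuously differentiable and μ-strongly convex (μ > 0) with minimizer x* and f* = f(x*). Let r > 0 and 0 < β ≤ min{2/3, (1+r)/(2r)}. Define for t > 0: D(t) = t^{βr}, B(t) = √(βr·[(1−β)r + 1]·t^{βr−2}), A(t) = √((βr/((1−β)r + 1))·t^{βr}), C(t) = [1 − βr/((1−β)r + 1)]·t^{βr}, and P(t) = μt² + (βr − 2)(βr − r − 1). Let T > 0 be such that P(s) ≥ 0 for all s ≥ T. Then for every twice differentiable solution x of ẍ(t) + (r/t)·ẋ(t) + ∇f(x(t)) = 0 on [T, ∞), the function L(t) = (1/2)‖A(t)ẋ(t) + B(t)(x(t) − x*)‖² + (1/2)C(t)‖ẋ(t)‖² + D(t)(f(x(t)) − f*) satisfies L'(t) ≤ 0 for all t ≥ T; in particular L is nonincreasing on [T, ∞).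 -/
/-!
Expanding the square, `L(t)` is the quadratic form
`½ t^s ‖ẋ‖² + s t^(s-1) ⟪ẋ, x - x*⟫ + ½ s c t^(s-2) ‖x - x*‖² + t^s (f(x) - f*)`
with `s = βr` and `c = (1 - β)r + 1 = r + 1 - s`. Differentiating along a solution, this
value of `c` makes the cross terms `⟪ẋ, x - x*⟫` cancel, leaving
`(3s/2 - r) t^(s-1) ‖ẋ‖² + ½ s c (s - 2) t^(s-3) ‖x - x*‖²
  + s t^(s-1) (f(x) - f* - ⟪∇f(x), x - x*⟫)`.
The first term is `≤ 0` because `β ≤ 2/3`; strong convexity bounds the last bracket by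
`-μ/2 ‖x - x*‖²`, after which the `‖x - x*‖²` coefficient is `-½ s t^(s-3) P(t) ≤ 0`.
-/

open RealInnerProductSpace Set

lemma antitoneOn_of_forall_hasDerivWithinAt_nonpos {D : Set ℝ} (hD : Convex ℝ D)
    {g : ℝ → ℝ} (h : ∀ t ∈ D, ∃ g', HasDerivWithinAt g g' D t ∧ g' ≤ 0) : AntitoneOn g D := by
  choose! g' hg' hg'_nonpos using h
  refine antitoneOn_of_hasDerivWithinAt_nonpos hD
    (fun t ht => (hg' t ht).continuousWithinAt) (fun t ht => ?_)
    (fun t ht => hg'_nonpos t (interior_subset ht))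
  exact ((hg' t (interior_subset ht)).hasDerivAt (mem_interior_iff_mem_nhds.mp ht)).hasDerivWithinAt

section Lyapunov

variable {E : Type*} [NormedAddCommGroup E] [InnerProductSpace ℝ E]

lemma HasGradientAt.comp_hasDerivWithinAt [CompleteSpace E] {f : E → ℝ} {g : E} {x : ℝ → E}
    {v : E} {S : Set ℝ} {t : ℝ} (hf : HasGradientAt f g (x t)) (hx : HasDerivWithinAt x v S t) :
    HasDerivWithinAt (fun τ => f (x τ)) ⟪g, v⟫ S t :=
  (hf.hasFDerivAt.comp_hasDerivWithinAt t hx).congr_deriv (by simp)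

noncomputable def expandedLyapunov (f : E → ℝ) (xstar : E) (s c t : ℝ) (x v : E) : ℝ :=
  1 / 2 * t ^ s * ‖v‖ ^ 2 + s * t ^ (s - 1) * ⟪v, x - xstar⟫
    + 1 / 2 * (s * c) * t ^ (s - 2) * ‖x - xstar‖ ^ 2 + t ^ s * (f x - f xstar)

lemma lyapunov_eq_expandedLyapunov {s c t : ℝ} (hs : 0 < s) (hc : 0 < c) (ht : 0 < t)
    (f : E → ℝ) (xstar x v : E) :
    1 / 2 * ‖√(s / c * t ^ s) • v + √(s * c * t ^ (s - 2)) • (x - xstar)‖ ^ 2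
      + 1 / 2 * ((1 - s / c) * t ^ s) * ‖v‖ ^ 2 + t ^ s * (f x - f xstar)
      = expandedLyapunov f xstar s c t x v := by
  have hA : √(s / c * t ^ s) ^ 2 = s / c * t ^ s := Real.sq_sqrt (by positivity)
  have hB : √(s * c * t ^ (s - 2)) ^ 2 = s * c * t ^ (s - 2) := Real.sq_sqrt (by positivity)
  have hAB : √(s / c * t ^ s) * √(s * c * t ^ (s - 2)) = s * t ^ (s - 1) := by
    rw [← Real.sqrt_mul (by positivity), ← Real.sqrt_sq (by positivity : 0 ≤ s * t ^ (s - 1))]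
    have h2 : t ^ (s - 2) = t ^ s / t ^ 2 := by exact_mod_cast Real.rpow_sub_natCast ht.ne' s 2
    rw [Real.rpow_sub_one ht.ne', h2]
    field_simp
  rw [expandedLyapunov, norm_add_sq_real, norm_smul, norm_smul, real_inner_smul_left,
    real_inner_smul_right, mul_pow, mul_pow, Real.norm_eq_abs, Real.norm_eq_abs, sq_abs, sq_abs,
    hA, hB]
  linear_combination ⟪v, x - xstar⟫ * hAB

noncomputable def lyapunovRate [CompleteSpace E] (f : E → ℝ) (xstar : E) (r s t : ℝ) (x v : E) :
    ℝ :=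
  (3 * s / 2 - r) * t ^ (s - 1) * ‖v‖ ^ 2
    + s / 2 * (r + 1 - s) * (s - 2) * t ^ (s - 3) * ‖x - xstar‖ ^ 2
    + s * t ^ (s - 1) * (f x - f xstar - ⟪gradient f x, x - xstar⟫)

lemma hasDerivWithinAt_expandedLyapunov [CompleteSpace E] {f : E → ℝ} {xstar : E}
    {r s c t : ℝ} {S : Set ℝ} {x v a : ℝ → E} (hc : c = r + 1 - s) (ht : 0 < t)
    (hf : DifferentiableAt ℝ f (x t)) (hx : HasDerivWithinAt x (v t) S t)
    (hv : HasDerivWithinAt v (a t) S t) (hode : a t + (r / t) • v t + gradient f (x t) = 0) :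
    HasDerivWithinAt (fun τ => expandedLyapunov f xstar s c τ (x τ) (v τ))
      (lyapunovRate f xstar r s t (x t) (v t)) S t := by
  have hpow (p : ℝ) : HasDerivWithinAt (fun τ : ℝ => τ ^ p) (p * t ^ (p - 1)) S t :=
    (Real.hasDerivAt_rpow_const (Or.inl ht.ne')).hasDerivWithinAt
  have hu := hx.sub_const xstar
  have hfx := (hf.hasGradientAt.comp_hasDerivWithinAt hx).sub_const (f xstar)
  have hQ := (((((hpow s).const_mul (1 / 2)).mul hv.norm_sq).add
    (((hpow (s - 1)).const_mul s).mul (hv.inner ℝ hu))).add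
    (((hpow (s - 2)).const_mul (1 / 2 * (s * c))).mul hu.norm_sq)).add ((hpow s).mul hfx)
  refine hQ.congr_deriv ?_
  have ha : a t = -((r / t) • v t + gradient f (x t)) :=
    eq_neg_of_add_eq_zero_left (by rwa [← add_assoc])
  have hrpow (n : ℕ) : t ^ (s - n) = t ^ s / t ^ n := Real.rpow_sub_natCast ht.ne' s n
  have h1 : t ^ (s - 1) = t ^ s / t := by simpa using hrpow 1
  have h2 : t ^ (s - 2) = t ^ s / t ^ 2 := by exact_mod_cast hrpow 2
  have h3 : t ^ (s - 3) = t ^ s / t ^ 3 := by exact_mod_cast hrpow 3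
  rw [lyapunovRate, ha, hc, sub_sub, sub_sub, real_inner_comm (x t - xstar)]
  norm_num only [h1, h2, h3, inner_neg_left, inner_neg_right, inner_add_left, inner_add_right,
    real_inner_smul_left, real_inner_smul_right, real_inner_self_eq_norm_sq,
    real_inner_comm (v t)]
  field_simp
  ring

lemma lyapunovRate_nonpos [CompleteSpace E] {f : E → ℝ} {xstar x v : E} {μ r s t : ℝ}
    (hs : 0 < s) (hsr : 3 * s ≤ 2 * r) (ht : 0 < t)
    (hP : 0 ≤ μ * t ^ 2 + (s - 2) * (s - r - 1))
    (hsc : μ / 2 * ‖xstar - x‖ ^ 2 ≤ f xstar - f x - ⟪gradient f x, xstar - x⟫) :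
    lyapunovRate f xstar r s t x v ≤ 0 := by
  set p := t ^ (s - 3)
  have hp : 0 < p := Real.rpow_pos_of_pos ht _
  have h1 : t ^ (s - 1) = p * t ^ 2 := by
    rw [show s - 1 = (s - 3) + 2 by ring, Real.rpow_add ht, Real.rpow_two]
  have hgap : f x - f xstar - ⟪gradient f x, x - xstar⟫ + μ / 2 * ‖x - xstar‖ ^ 2 ≤ 0 := by
    rw [norm_sub_rev, ← neg_sub x xstar, inner_neg_right] at hsc
    linarith
  have hv : (3 * s / 2 - r) * (p * t ^ 2) * ‖v‖ ^ 2 ≤ 0 :=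
    mul_nonpos_of_nonpos_of_nonneg
      (mul_nonpos_of_nonpos_of_nonneg (by linarith) (by positivity)) (by positivity)
  have hu : 0 ≤ s / 2 * p * ‖x - xstar‖ ^ 2 * (μ * t ^ 2 + (s - 2) * (s - r - 1)) := by
    positivity
  have hg := mul_nonpos_of_nonneg_of_nonpos (by positivity : 0 ≤ s * (p * t ^ 2)) hgap
  calc lyapunovRate f xstar r s t x v
      = (3 * s / 2 - r) * (p * t ^ 2) * ‖v‖ ^ 2
        - s / 2 * p * ‖x - xstar‖ ^ 2 * (μ * t ^ 2 + (s - 2) * (s - r - 1))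
        + s * (p * t ^ 2)
          * (f x - f xstar - ⟪gradient f x, x - xstar⟫ + μ / 2 * ‖x - xstar‖ ^ 2) := by
        rw [lyapunovRate, h1]; ring
    _ ≤ 0 := by linarith

end Lyapunov

theorem stmt14_general (d : ℕ) (f : EuclideanSpace ℝ (Fin d) → ℝ) (μ : ℝ)
    (hf : ContDiff ℝ 2 f)
    (hsc : ∀ z y : EuclideanSpace ℝ (Fin d),
      μ / 2 * ‖y - z‖ ^ 2 ≤ f y - f z - ⟪gradient f z, y - z⟫)
    (xstar : EuclideanSpace ℝ (Fin d))
    (r β : ℝ) (hr : 0 < r) (hβ0 : 0 < β)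
    (hβ : β ≤ min (2 / 3) ((1 + r) / (2 * r)))
    (T : ℝ) (hT : 0 < T)
    (hP : ∀ s ≥ T, 0 ≤ μ * s ^ 2 + (β * r - 2) * (β * r - r - 1))
    (x v a : ℝ → EuclideanSpace ℝ (Fin d))
    (hx : ∀ t ∈ Set.Ici T, HasDerivWithinAt x (v t) (Set.Ici T) t)
    (hv : ∀ t ∈ Set.Ici T, HasDerivWithinAt v (a t) (Set.Ici T) t)
    (hode : ∀ t ∈ Set.Ici T, a t + (r / t) • v t + gradient f (x t) = 0) :
    let D : ℝ → ℝ := fun t => t ^ (β * r)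
    let B : ℝ → ℝ := fun t => Real.sqrt (β * r * ((1 - β) * r + 1) * t ^ (β * r - 2))
    let A : ℝ → ℝ := fun t => Real.sqrt (β * r / ((1 - β) * r + 1) * t ^ (β * r))
    let C : ℝ → ℝ := fun t => (1 - β * r / ((1 - β) * r + 1)) * t ^ (β * r)
    let L : ℝ → ℝ := fun t => 1 / 2 * ‖A t • v t + B t • (x t - xstar)‖ ^ 2
      + 1 / 2 * C t * ‖v t‖ ^ 2 + D t * (f (x t) - f xstar)
    (∀ t ∈ Set.Ici T, ∃ L' : ℝ,
      HasDerivWithinAt L L' (Set.Ici T) t ∧ L' ≤ 0) ∧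
    AntitoneOn L (Set.Ici T) := by
  intro D B A C L
  have hs : 0 < β * r := by positivity
  have hsr : 3 * (β * r) ≤ 2 * r := by nlinarith [min_le_left (2 / 3) ((1 + r) / (2 * r))]
  have hc : 0 < (1 - β) * r + 1 := by nlinarith
  have hLQ : ∀ t ∈ Ici T,
      L t = expandedLyapunov f xstar (β * r) ((1 - β) * r + 1) t (x t) (v t) := fun t ht =>
    lyapunov_eq_expandedLyapunov hs hc (hT.trans_le ht) f xstar (x t) (v t)
  have hderiv : ∀ t ∈ Ici T, ∃ L' : ℝ, HasDerivWithinAt L L' (Ici T) t ∧ L' ≤ 0 := by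
    intro t ht
    have htpos : 0 < t := hT.trans_le ht
    refine ⟨lyapunovRate f xstar r (β * r) t (x t) (v t), ?_, ?_⟩
    · exact (hasDerivWithinAt_expandedLyapunov (by ring) htpos
        (hf.differentiable (by norm_num) (x t)) (hx t ht) (hv t ht) (hode t ht)).congr hLQ
        (hLQ t ht)
    · exact lyapunovRate_nonpos hs hsr htpos (hP t ht) (hsc (x t) xstar)
  exact ⟨hderiv, antitoneOn_of_forall_hasDerivWithinAt_nonpos (convex_Ici T) hderiv⟩

/-- for a μ-strongly convex `f` and `α = 1`, past any time `T`
beyond which the polynomial `P(t) = μt² + (βr−2)(βr−r−1)` is nonnegative, the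
Lyapunov function `L` built from the coefficients `A, B, C, D` (with `ξ(t) = r ln t`)
is differentiable with nonpositive derivative along solutions of
`ẍ + (r/t)ẋ + ∇f(x) = 0`; in particular `L` is nonincreasing on `[T, ∞)`. -/
theorem stmt14 (d : ℕ) (f : EuclideanSpace ℝ (Fin d) → ℝ) (μ : ℝ) (hμ : 0 < μ)
    (hf : ContDiff ℝ 2 f)
    (hsc : ∀ z y : EuclideanSpace ℝ (Fin d),
      μ / 2 * ‖y - z‖ ^ 2 ≤ f y - f z - ⟪gradient f z, y - z⟫)
    (xstar : EuclideanSpace ℝ (Fin d)) (hmin : ∀ y, f xstar ≤ f y)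
    (r β : ℝ) (hr : 0 < r) (hβ0 : 0 < β)
    (hβ : β ≤ min (2 / 3) ((1 + r) / (2 * r)))
    (T : ℝ) (hT : 0 < T)
    (hP : ∀ s ≥ T, 0 ≤ μ * s ^ 2 + (β * r - 2) * (β * r - r - 1))
    (x v a : ℝ → EuclideanSpace ℝ (Fin d))
    (hx : ∀ t ∈ Set.Ici T, HasDerivWithinAt x (v t) (Set.Ici T) t)
    (hv : ∀ t ∈ Set.Ici T, HasDerivWithinAt v (a t) (Set.Ici T) t)
    (hode : ∀ t ∈ Set.Ici T, a t + (r / t) • v t + gradient f (x t) = 0) :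
    let D : ℝ → ℝ := fun t => t ^ (β * r)
    let B : ℝ → ℝ := fun t => Real.sqrt (β * r * ((1 - β) * r + 1) * t ^ (β * r - 2))
    let A : ℝ → ℝ := fun t => Real.sqrt (β * r / ((1 - β) * r + 1) * t ^ (β * r))
    let C : ℝ → ℝ := fun t => (1 - β * r / ((1 - β) * r + 1)) * t ^ (β * r)
    let L : ℝ → ℝ := fun t => 1 / 2 * ‖A t • v t + B t • (x t - xstar)‖ ^ 2
      + 1 / 2 * C t * ‖v t‖ ^ 2 + D t * (f (x t) - f xstar)
    (∀ t ∈ Set.Ici T, ∃ L' : ℝ,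
      HasDerivWithinAt L L' (Set.Ici T) t ∧ L' ≤ 0) ∧
    AntitoneOn L (Set.Ici T) :=
  stmt14_general d f μ hf hsc xstar r β hr hβ0 hβ T hT hP x v a hx hv hode
end

section
/- Let f : ℝ^d → ℝ be twice continuously differentiable and μ-strongly convex (μ > 0) with minimizer x* and f* = f(x*). Let 0 < r ≤ 3 and t₀ > 0, and let x : [t₀, ∞) → ℝ^d be a twice differentiable solution of ẍ(t) + (r/t)·ẋ(t) + ∇f(x(t)) = 0 with x(t₀) = x₀ and ẋ(t₀) = 0. Then for all t ≥ t₀: f(x(t)) − f* ≤ [(r/3)·((r/3) + 1)·t₀^{(2r/3)−2}·‖x₀ − x*‖² + t₀^{2r/3}·(f(x₀) − f*)]·t^{−2r/3}. -/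
/-!
Lyapunov argument. The energy `dampedEnergy` (the paper's Lyapunov function with β = 2/3) is
nonincreasing along the trajectory: once the equation is substituted, its derivative is a positive
multiple of the convexity gap `f(x) - f(x*) - ⟪∇f(x), x - x*⟫ ≤ 0` plus `(r/3 - 1)` times a
nonnegative quantity. Its first term is `t^{2r/3} (f(x(t)) - f*)` and the others are nonnegative,
while at `t₀`, where `ẋ = 0`, it equals the bracket of the bound.
-/

open RealInnerProductSpace

lemma Real.hasDerivWithinAt_rpow_const {s : Set ℝ} {t : ℝ} (ht : 0 < t) (p : ℝ) :
    HasDerivWithinAt (fun u : ℝ => u ^ p) (p * t ^ (p - 1)) s t :=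
  (Real.hasDerivAt_rpow_const (Or.inl ht.ne')).hasDerivWithinAt

lemma Real.rpow_sub_ofNat {t : ℝ} (ht : 0 < t) (p : ℝ) (n : ℕ) [n.AtLeastTwo] :
    t ^ (p - OfNat.ofNat n) = t ^ p / t ^ (OfNat.ofNat n : ℕ) := by
  rw [Real.rpow_sub ht, Real.rpow_ofNat]

section

variable {E : Type*} [NormedAddCommGroup E] [InnerProductSpace ℝ E]

noncomputable def dampedMomentum (r : ℝ) (xstar : E) (x v : ℝ → E) (t : ℝ) : E :=
  (2 * (r / 3) * t ^ (r / 3 - 1)) • (x t - xstar) + t ^ (r / 3) • v t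

noncomputable def dampedEnergy (f : E → ℝ) (r : ℝ) (xstar : E) (x v : ℝ → E) (t : ℝ) : ℝ :=
  t ^ (2 * r / 3) * (f (x t) - f xstar) + ‖dampedMomentum r xstar x v t‖ ^ 2 / 2
    + r / 3 * (1 - r / 3) * t ^ (2 * r / 3 - 2) * ‖x t - xstar‖ ^ 2

/-- The weights are chosen so that the friction `r / t` cancels every velocity term. -/
lemma hasDerivWithinAt_dampedMomentum {x v a : ℝ → E} {s : Set ℝ} {r t : ℝ} (xstar g : E)
    (ht : 0 < t) (hx : HasDerivWithinAt x (v t) s t) (hv : HasDerivWithinAt v (a t) s t)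
    (hode : a t + (r / t) • v t + g = 0) :
    HasDerivWithinAt (dampedMomentum r xstar x v)
      ((2 * (r / 3) * (r / 3 - 1) * t ^ (r / 3 - 2)) • (x t - xstar) - t ^ (r / 3) • g) s t := by
  have hderiv := (((Real.hasDerivWithinAt_rpow_const ht (r / 3 - 1)).const_mul (2 * (r / 3))).smul
    (hx.sub_const xstar)).add ((Real.hasDerivWithinAt_rpow_const ht (r / 3)).smul hv)
  refine hderiv.congr_deriv ?_
  rw [eq_neg_add_of_add_eq hode, sub_sub, one_add_one_eq_two, Real.rpow_sub_ofNat ht,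
    Real.rpow_sub_one ht.ne']
  field_simp
  module

lemma hasDerivWithinAt_dampedEnergy [CompleteSpace E] {f : E → ℝ} {x v a : ℝ → E} {s : Set ℝ}
    {r t : ℝ} (xstar : E) (ht : 0 < t) (hf : DifferentiableAt ℝ f (x t))
    (hx : HasDerivWithinAt x (v t) s t) (hv : HasDerivWithinAt v (a t) s t)
    (hode : a t + (r / t) • v t + gradient f (x t) = 0) :
    HasDerivWithinAt (dampedEnergy f r xstar x v)
      (2 * (r / 3) * t ^ (2 * r / 3 - 1)
          * (f (x t) - f xstar - ⟪gradient f (x t), x t - xstar⟫)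
        + 2 * (r / 3) * (r / 3 - 1) * (r / 3 + 1) * t ^ (2 * r / 3 - 3) * ‖x t - xstar‖ ^ 2)
      s t := by
  have hfx : HasDerivWithinAt (fun u => f (x u) - f xstar) ⟪gradient f (x t), v t⟫ s t :=
    (hf.hasGradientAt.hasFDerivAt.comp_hasDerivWithinAt t hx).sub_const _
  have hderiv := (((Real.hasDerivWithinAt_rpow_const ht (2 * r / 3)).mul hfx).add
    ((hasDerivWithinAt_dampedMomentum xstar _ ht hx hv hode).norm_sq.div_const 2)).add
    (((Real.hasDerivWithinAt_rpow_const ht (2 * r / 3 - 2)).const_mul (r / 3 * (1 - r / 3))).mul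
      (hx.sub_const xstar).norm_sq)
  refine hderiv.congr_deriv ?_
  have hsq : t ^ (2 * r / 3) = (t ^ (r / 3)) ^ 2 := by
    rw [← Real.rpow_mul_natCast ht.le]; ring_nf
  simp only [dampedMomentum]
  generalize x t - xstar = X
  generalize gradient f (x t) = g
  simp only [inner_add_left, inner_sub_right, inner_smul_left, inner_smul_right,
    real_inner_self_eq_norm_sq, RCLike.conj_to_real]
  rw [real_inner_comm X (v t), real_inner_comm g X, real_inner_comm g (v t),
    show 2 * r / 3 - 2 - 1 = 2 * r / 3 - 3 by ring, Real.rpow_sub_ofNat ht, Real.rpow_sub_ofNat ht,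
    Real.rpow_sub_ofNat ht, Real.rpow_sub_one ht.ne', Real.rpow_sub_one ht.ne', hsq]
  field_simp
  ring

lemma rpow_mul_sub_le_dampedEnergy {f : E → ℝ} {x v : ℝ → E} {r t : ℝ} (xstar : E)
    (hr0 : 0 ≤ r) (hr3 : r ≤ 3) (ht : 0 ≤ t) :
    t ^ (2 * r / 3) * (f (x t) - f xstar) ≤ dampedEnergy f r xstar x v t := by
  have hweight : 0 ≤ r / 3 * (1 - r / 3) * t ^ (2 * r / 3 - 2) :=
    mul_nonneg (mul_nonneg (by linarith) (by linarith)) (Real.rpow_nonneg ht _)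
  unfold dampedEnergy
  linarith [mul_nonneg hweight (sq_nonneg ‖x t - xstar‖), sq_nonneg ‖dampedMomentum r xstar x v t‖]

lemma dampedEnergy_of_velocity_eq_zero {f : E → ℝ} {x v : ℝ → E} {r t : ℝ} (xstar : E)
    (ht : 0 < t) (hv : v t = 0) :
    dampedEnergy f r xstar x v t = r / 3 * (r / 3 + 1) * t ^ (2 * r / 3 - 2) * ‖x t - xstar‖ ^ 2
      + t ^ (2 * r / 3) * (f (x t) - f xstar) := by
  have hsq : t ^ (2 * r / 3 - 2) = (t ^ (r / 3 - 1)) ^ 2 := by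
    rw [← Real.rpow_mul_natCast ht.le]; ring_nf
  rw [dampedEnergy, dampedMomentum, hv, smul_zero, add_zero, norm_smul, mul_pow,
    Real.norm_eq_abs, sq_abs, hsq]
  ring

theorem antitoneOn_dampedEnergy [CompleteSpace E] {f : E → ℝ} {x v a : ℝ → E} {r t₀ : ℝ}
    (xstar : E) (hr0 : 0 ≤ r) (hr3 : r ≤ 3) (ht₀ : 0 < t₀) (hf : Differentiable ℝ f)
    (hconv : ∀ y, f y - f xstar ≤ ⟪gradient f y, y - xstar⟫)
    (hx : ∀ t ∈ Set.Ici t₀, HasDerivWithinAt x (v t) (Set.Ici t₀) t)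
    (hv : ∀ t ∈ Set.Ici t₀, HasDerivWithinAt v (a t) (Set.Ici t₀) t)
    (hode : ∀ t ∈ Set.Ici t₀, a t + (r / t) • v t + gradient f (x t) = 0) :
    AntitoneOn (dampedEnergy f r xstar x v) (Set.Ici t₀) := by
  have hderiv (t : ℝ) (ht : t ∈ Set.Ici t₀) :=
    hasDerivWithinAt_dampedEnergy xstar (ht₀.trans_le ht) (hf _) (hx t ht) (hv t ht) (hode t ht)
  refine antitoneOn_of_hasDerivWithinAt_nonpos (convex_Ici t₀)
    (fun t ht => (hderiv t ht).continuousWithinAt)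
    (fun t ht => (hderiv t (interior_subset ht)).mono interior_subset) (fun t ht => ?_)
  have ht0 : 0 < t := ht₀.trans_le (interior_subset ht)
  have hgap := sub_nonpos.mpr (hconv (x t))
  have hfirst : 0 ≤ 2 * (r / 3) * t ^ (2 * r / 3 - 1) := by positivity
  have hsecond : 2 * (r / 3) * (r / 3 - 1) * (r / 3 + 1) * t ^ (2 * r / 3 - 3) ≤ 0 :=
    mul_nonpos_of_nonpos_of_nonneg
      (mul_nonpos_of_nonpos_of_nonneg
        (mul_nonpos_of_nonneg_of_nonpos (by positivity) (by linarith)) (by linarith))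
      (by positivity)
  linarith [mul_nonpos_of_nonneg_of_nonpos hfirst hgap,
    mul_nonpos_of_nonpos_of_nonneg hsecond (sq_nonneg ‖x t - xstar‖)]

end

theorem stmt18_general (d : ℕ) (f : EuclideanSpace ℝ (Fin d) → ℝ) (μ : ℝ) (hμ : 0 < μ)
    (hf : ContDiff ℝ 2 f)
    (hsc : ∀ z y : EuclideanSpace ℝ (Fin d),
      μ / 2 * ‖y - z‖ ^ 2 ≤ f y - f z - ⟪gradient f z, y - z⟫)
    (xstar : EuclideanSpace ℝ (Fin d))
    (r t₀ : ℝ) (hr0 : 0 < r) (hr3 : r ≤ 3) (ht₀ : 0 < t₀)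
    (x₀ : EuclideanSpace ℝ (Fin d))
    (x v a : ℝ → EuclideanSpace ℝ (Fin d))
    (hx : ∀ t ∈ Set.Ici t₀, HasDerivWithinAt x (v t) (Set.Ici t₀) t)
    (hv : ∀ t ∈ Set.Ici t₀, HasDerivWithinAt v (a t) (Set.Ici t₀) t)
    (hode : ∀ t ∈ Set.Ici t₀, a t + (r / t) • v t + gradient f (x t) = 0)
    (hx0 : x t₀ = x₀) (hv0 : v t₀ = 0) :
    ∀ t ≥ t₀, f (x t) - f xstar ≤
      (r / 3 * (r / 3 + 1) * t₀ ^ (2 * r / 3 - 2) * ‖x₀ - xstar‖ ^ 2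
        + t₀ ^ (2 * r / 3) * (f x₀ - f xstar)) * t ^ (-(2 * r / 3)) := by
  intro t ht
  have hconv (y : EuclideanSpace ℝ (Fin d)) : f y - f xstar ≤ ⟪gradient f y, y - xstar⟫ := by
    have hquad := hsc y xstar
    rw [← neg_sub y xstar, inner_neg_right] at hquad
    have : 0 ≤ μ / 2 * ‖-(y - xstar)‖ ^ 2 := by positivity
    linarith
  have ht0 : 0 < t := ht₀.trans_le ht
  rw [Real.rpow_neg ht0.le, ← div_eq_mul_inv, le_div_iff₀ (by positivity), mul_comm, ← hx0,
    ← dampedEnergy_of_velocity_eq_zero xstar ht₀ hv0]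
  calc t ^ (2 * r / 3) * (f (x t) - f xstar) ≤ dampedEnergy f r xstar x v t :=
        rpow_mul_sub_le_dampedEnergy xstar hr0.le hr3 ht0.le
    _ ≤ dampedEnergy f r xstar x v t₀ :=
        antitoneOn_dampedEnergy xstar hr0.le hr3 ht₀ (hf.differentiable two_ne_zero) hconv
          hx hv hode Set.self_mem_Ici ht ht

/-- for μ-strongly convex `f`, `α = 1` and `0 < r ≤ 3`, along the
solution of `ẍ + (r/t)ẋ + ∇f(x) = 0` on `[t₀, ∞)` with `x(t₀) = x₀`, `ẋ(t₀) = 0`,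
one has `f(x(t)) − f* ≤ [(r/3)((r/3)+1)t₀^{(2r/3)−2}‖x₀ − x*‖²
+ t₀^{2r/3}(f(x₀) − f*)]·t^{−2r/3}`. -/
theorem stmt18 (d : ℕ) (f : EuclideanSpace ℝ (Fin d) → ℝ) (μ : ℝ) (hμ : 0 < μ)
    (hf : ContDiff ℝ 2 f)
    (hsc : ∀ z y : EuclideanSpace ℝ (Fin d),
      μ / 2 * ‖y - z‖ ^ 2 ≤ f y - f z - ⟪gradient f z, y - z⟫)
    (xstar : EuclideanSpace ℝ (Fin d)) (hmin : ∀ y, f xstar ≤ f y)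
    (r t₀ : ℝ) (hr0 : 0 < r) (hr3 : r ≤ 3) (ht₀ : 0 < t₀)
    (x₀ : EuclideanSpace ℝ (Fin d))
    (x v a : ℝ → EuclideanSpace ℝ (Fin d))
    (hx : ∀ t ∈ Set.Ici t₀, HasDerivWithinAt x (v t) (Set.Ici t₀) t)
    (hv : ∀ t ∈ Set.Ici t₀, HasDerivWithinAt v (a t) (Set.Ici t₀) t)
    (hode : ∀ t ∈ Set.Ici t₀, a t + (r / t) • v t + gradient f (x t) = 0)
    (hx0 : x t₀ = x₀) (hv0 : v t₀ = 0) :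
    ∀ t ≥ t₀, f (x t) - f xstar ≤
      (r / 3 * (r / 3 + 1) * t₀ ^ (2 * r / 3 - 2) * ‖x₀ - xstar‖ ^ 2
        + t₀ ^ (2 * r / 3) * (f x₀ - f xstar)) * t ^ (-(2 * r / 3)) :=
  stmt18_general d f μ hμ hf hsc xstar r t₀ hr0 hr3 ht₀ x₀ x v a hx hv hode hx0 hv0
end
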